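/- arXiv:1710.06635 — 9 statements merged into one kernel-verified Lean document; each statement's English description precedes it below -/
import Mathlib

section
/- For every φ ∈ ℝ^n and γ ∈ ℝ^m, the quadratic form of the Jacobian satisfies (φᵀ, γᵀ) J_F(f,g) (φ, γ) = (1/ε) Σ_{i,j} P_{ij} (φ_i + γ_j)², where P = P(f,g); in particular this quantity is nonnegative, and it equals zero if and only if φ_i + γ_j = 0 for all i = 1,…,n and j = 1,…,m. -/
open Matrix

/-- The quadratic form of the Jacobian `J_F(f,g)` satisfies
`(φᵀ, γᵀ) J_F(f,g) (φ, γ) = (1/ε) Σ_{ij} P_{ij} (φ_i + γ_j)²`; in particular it is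
nonnegative, and it vanishes iff `φ_i + γ_j = 0` for all `i, j`. -/
theorem jacobian_quadratic_form (n m : ℕ) (C : Matrix (Fin n) (Fin m) ℝ)
    (ε : ℝ) (hε : 0 < ε) (f : Fin n → ℝ) (g : Fin m → ℝ)
    (φ : Fin n → ℝ) (γ : Fin m → ℝ) :
    let P : Matrix (Fin n) (Fin m) ℝ :=
      fun i j => Real.exp (-f i / ε) * Real.exp (-C i j / ε) * Real.exp (-g j / ε)
    let J : Matrix (Fin n ⊕ Fin m) (Fin n ⊕ Fin m) ℝ :=
      (1 / ε) • Matrix.fromBlocks (Matrix.diagonal (P *ᵥ 1)) P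
        Pᵀ (Matrix.diagonal (Pᵀ *ᵥ 1))
    Sum.elim φ γ ⬝ᵥ (J *ᵥ Sum.elim φ γ) =
        (1 / ε) * ∑ i : Fin n, ∑ j : Fin m, P i j * (φ i + γ j) ^ 2 ∧
      0 ≤ Sum.elim φ γ ⬝ᵥ (J *ᵥ Sum.elim φ γ) ∧
      (Sum.elim φ γ ⬝ᵥ (J *ᵥ Sum.elim φ γ) = 0 ↔ ∀ i j, φ i + γ j = 0) := by
  intro P J
  have hP : ∀ i j, 0 < P i j := fun i j => by positivity
  have key : Sum.elim φ γ ⬝ᵥ (J *ᵥ Sum.elim φ γ) =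
      (1 / ε) * ∑ i : Fin n, ∑ j : Fin m, P i j * (φ i + γ j) ^ 2 := by
    show Sum.elim φ γ ⬝ᵥ
        (((1 / ε) • Matrix.fromBlocks (Matrix.diagonal (P *ᵥ 1)) P
          Pᵀ (Matrix.diagonal (Pᵀ *ᵥ 1))) *ᵥ Sum.elim φ γ) = _
    rw [Matrix.smul_mulVec, dotProduct_smul, smul_eq_mul]
    congr 1
    rw [Matrix.fromBlocks_mulVec]
    simp only [dotProduct, Fintype.sum_sum_type, Sum.elim_inl, Sum.elim_inr,
      Pi.add_apply, Function.comp_apply, Matrix.diagonal_apply, ite_mul, mul_ite,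
      zero_mul, mul_zero, Finset.sum_ite_eq, Finset.sum_ite_eq', Finset.mem_univ,
      if_true, Matrix.mulVec, Matrix.transpose_apply, Pi.one_apply, mul_one,
      mul_add, Finset.mul_sum, Finset.sum_mul, Finset.sum_add_distrib]
    rw [Finset.sum_comm (f := fun j i => γ j * (P i j * φ i)),
      Finset.sum_comm (f := fun j i => γ j * (P i j * γ j))]
    have : ∀ i : Fin n, ∑ j, P i j * (φ i + γ j) ^ 2 =
        (∑ j, φ i * (P i j * φ i)) + (∑ j, φ i * (P i j * γ j)) +
        ((∑ j, γ j * (P i j * φ i)) + ∑ j, γ j * (P i j * γ j)) := by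
      intro i
      rw [← Finset.sum_add_distrib, ← Finset.sum_add_distrib, ← Finset.sum_add_distrib]
      exact Finset.sum_congr rfl fun j _ => by ring
    simp only [this]
    rw [Finset.sum_add_distrib, Finset.sum_add_distrib, Finset.sum_add_distrib]
  have hterm : ∀ i j, 0 ≤ P i j * (φ i + γ j) ^ 2 := fun i j => by positivity
  refine ⟨key, ?_, ?_⟩
  · rw [key]
    have : 0 ≤ ∑ i : Fin n, ∑ j : Fin m, P i j * (φ i + γ j) ^ 2 :=
      Finset.sum_nonneg fun i _ => Finset.sum_nonneg fun j _ => hterm i j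
    positivity
  · rw [key]
    rw [mul_eq_zero]
    have hε' : (1 : ℝ) / ε ≠ 0 := by positivity
    simp only [hε', false_or]
    rw [Finset.sum_eq_zero_iff_of_nonneg
        (fun i _ => Finset.sum_nonneg fun j _ => hterm i j)]
    constructor
    · intro h i j
      have := (Finset.sum_eq_zero_iff_of_nonneg
        (fun j _ => hterm i j)).mp (h i (Finset.mem_univ i)) j (Finset.mem_univ j)
      have h2 : (φ i + γ j) ^ 2 = 0 := by
        rcases mul_eq_zero.mp this with h' | h'
        · exact absurd h' (ne_of_gt (hP i j))
        · exact h'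
      exact pow_eq_zero_iff (by norm_num) |>.mp h2
    · intro h i _
      exact Finset.sum_eq_zero fun j _ => by rw [h i j]; ring
end

section
/- Let m = n. Let f, g ∈ ℝ^n, set P := P(f,g), and let η = (α, β) ∈ ℝ^n × ℝ^n satisfy ‖(f,g) − (α,β)‖_∞ ≤ 1. Then there exists a vector z = (δf, δg) ∈ ℝ^n × ℝ^n solving the linear system J_F(f,g) z = [J_F(f,g) − J_F(α,β)] ((f,g) − (α,β)) such that ‖z‖_∞ ≤ ω ‖(f,g) − (α,β)‖_∞², where ω := (e^{1/ε} − 1) · (1 + 2 e^{1/ε} · max{‖P 1_n‖_∞, ‖Pᵀ 1_n‖_∞} / min_{i,j} P_{ij}). -/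
/-!
`J_F(f, g)` is `ε⁻¹` times the signless Laplacian `L_P` of the complete bipartite graph with
edge weights `P = P(f, g)`, and `J_F(f, g) - J_F(α, β) = ε⁻¹ L_{P - Q}` with `Q = P(α, β)`.
As `P > 0`, the kernel of `L_P` consists of the vectors `(c, -c)`, to which every `L_{P'} x` is
orthogonal, so the system is solvable. With `d = (f, g) - (α, β)` one has
`Q_ij = P_ij e^{(d_i + d_j)/ε}`, and convexity of `exp` bounds each term of the right-hand
side by `P_ij · 2‖d‖²(e^{2/ε} - 1)`. A maximum principle for `L_P` shows that shifting a
solution along the kernel brings its norm down to `‖L_{P-Q} d‖ / (2 min P_ij)`.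
-/

open Finset Matrix Real

theorem Matrix.IsHermitian.exists_mulVec_eq_of_dotProduct_eq_zero {m : Type*} [Fintype m]
    [DecidableEq m] {A : Matrix m m ℝ} (hA : A.IsHermitian) {r : m → ℝ}
    (hr : ∀ v, A *ᵥ v = 0 → r ⬝ᵥ v = 0) : ∃ z, A *ᵥ z = r := by
  have hrange : WithLp.toLp 2 r ∈ LinearMap.range (toEuclideanLin A) := by
    rw [← Submodule.orthogonal_orthogonal (LinearMap.range _),
      (isSymmetric_toEuclideanLin_iff.2 hA).orthogonal_range]
    intro v hv
    simp_all [EuclideanSpace.inner_eq_star_dotProduct, toLpLin_apply]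
  obtain ⟨z, hz⟩ := hrange
  exact ⟨z, by simpa [toLpLin_apply] using congrArg WithLp.ofLp hz⟩

section SignlessLaplacian

variable {ι κ : Type*} [Fintype ι] [Fintype κ] [DecidableEq ι] [DecidableEq κ]

/-- The signless Laplacian `D + A` of the complete bipartite graph on `ι ⊕ κ` with edge
weights `P`. -/
def signlessLaplacian (P : Matrix ι κ ℝ) : Matrix (ι ⊕ κ) (ι ⊕ κ) ℝ :=
  fromBlocks (diagonal (P *ᵥ 1)) P Pᵀ (diagonal (Pᵀ *ᵥ 1))

@[simp]
theorem signlessLaplacian_mulVec_inl (P : Matrix ι κ ℝ) (v : ι ⊕ κ → ℝ) (i : ι) :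
    (signlessLaplacian P *ᵥ v) (Sum.inl i) = ∑ j, P i j * (v (Sum.inl i) + v (Sum.inr j)) := by
  rw [signlessLaplacian, fromBlocks_mulVec, Sum.elim_inl, Pi.add_apply, mulVec_diagonal]
  simp [mulVec, dotProduct, mul_add, sum_add_distrib, sum_mul]

@[simp]
theorem signlessLaplacian_mulVec_inr (P : Matrix ι κ ℝ) (v : ι ⊕ κ → ℝ) (j : κ) :
    (signlessLaplacian P *ᵥ v) (Sum.inr j) = ∑ i, P i j * (v (Sum.inl i) + v (Sum.inr j)) := by
  rw [signlessLaplacian, fromBlocks_mulVec, Sum.elim_inr, Pi.add_apply, mulVec_diagonal]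
  simp [mulVec, dotProduct, mul_add, sum_add_distrib, sum_mul]

theorem signlessLaplacian_sub (P Q : Matrix ι κ ℝ) :
    signlessLaplacian (P - Q) = signlessLaplacian P - signlessLaplacian Q := by
  ext (i | i) (j | j) <;> simp [signlessLaplacian, sub_mulVec, diagonal_apply] <;> split_ifs <;> simp

theorem isHermitian_signlessLaplacian (P : Matrix ι κ ℝ) : (signlessLaplacian P).IsHermitian :=
  (isHermitian_diagonal _).fromBlocks (conjTranspose_eq_transpose_of_trivial P)
    (isHermitian_diagonal _)

theorem signlessLaplacian_mulVec_dotProduct (P : Matrix ι κ ℝ) (x v : ι ⊕ κ → ℝ) :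
    (signlessLaplacian P *ᵥ x) ⬝ᵥ v =
      ∑ i, ∑ j, P i j * (x (Sum.inl i) + x (Sum.inr j)) * (v (Sum.inl i) + v (Sum.inr j)) := by
  simp only [dotProduct, Fintype.sum_sum_type, signlessLaplacian_mulVec_inl,
    signlessLaplacian_mulVec_inr, sum_mul]
  rw [sum_comm (s := (univ : Finset κ)), ← sum_add_distrib]
  exact sum_congr rfl fun i _ => by rw [← sum_add_distrib]; exact sum_congr rfl fun j _ => by ring

theorem add_eq_zero_of_signlessLaplacian_mulVec_eq_zero {P : Matrix ι κ ℝ}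
    (hP : ∀ i j, 0 < P i j) {v : ι ⊕ κ → ℝ} (hv : signlessLaplacian P *ᵥ v = 0) (i : ι)
    (j : κ) : v (Sum.inl i) + v (Sum.inr j) = 0 := by
  have hterm := signlessLaplacian_mulVec_dotProduct P v v
  rw [hv, zero_dotProduct, eq_comm, Fintype.sum_eq_zero_iff_of_nonneg fun i =>
    sum_nonneg fun j _ => by rw [mul_assoc]; exact mul_nonneg (hP i j).le (mul_self_nonneg _)] at hterm
  have hrow := congrFun hterm i
  rw [Pi.zero_apply, Fintype.sum_eq_zero_iff_of_nonneg fun j => by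
    rw [mul_assoc]; exact mul_nonneg (hP i j).le (mul_self_nonneg _)] at hrow
  have hij := congrFun hrow j
  rw [Pi.zero_apply, mul_assoc, mul_eq_zero, mul_self_eq_zero] at hij
  exact hij.resolve_left (hP i j).ne'

theorem signlessLaplacian_mulVec_dotProduct_eq_zero {P : Matrix ι κ ℝ} (hP : ∀ i j, 0 < P i j)
    {v : ι ⊕ κ → ℝ} (hv : signlessLaplacian P *ᵥ v = 0) (Q : Matrix ι κ ℝ) (x : ι ⊕ κ → ℝ) :
    (signlessLaplacian Q *ᵥ x) ⬝ᵥ v = 0 := by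
  simp [signlessLaplacian_mulVec_dotProduct, add_eq_zero_of_signlessLaplacian_mulVec_eq_zero hP hv]

theorem exists_signlessLaplacian_mulVec_eq {P : Matrix ι κ ℝ} (hP : ∀ i j, 0 < P i j)
    (Q : Matrix ι κ ℝ) (x : ι ⊕ κ → ℝ) : ∃ z, signlessLaplacian P *ᵥ z = signlessLaplacian Q *ᵥ x :=
  (isHermitian_signlessLaplacian P).exists_mulVec_eq_of_dotProduct_eq_zero fun _ hv =>
    signlessLaplacian_mulVec_dotProduct_eq_zero hP hv Q x

theorem signlessLaplacian_mulVec_sum_elim_const_neg (P : Matrix ι κ ℝ) (c : ℝ) :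
    signlessLaplacian P *ᵥ Sum.elim (fun _ => c) (fun _ => -c) = 0 := by
  ext (i | j) <;> simp

theorem norm_signlessLaplacian_mulVec_le {A P : Matrix ι κ ℝ} {x : ι ⊕ κ → ℝ} {Φ : ℝ}
    (hΦ : 0 ≤ Φ) (h : ∀ i j, |A i j * (x (Sum.inl i) + x (Sum.inr j))| ≤ P i j * Φ) :
    ‖signlessLaplacian A *ᵥ x‖ ≤ max ‖P *ᵥ 1‖ ‖Pᵀ *ᵥ 1‖ * Φ := by
  refine (pi_norm_le_iff_of_nonneg (mul_nonneg (le_max_of_le_left (norm_nonneg _)) hΦ)).2 ?_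
  rintro (i | j)
  · calc ‖(signlessLaplacian A *ᵥ x) (Sum.inl i)‖
        ≤ ∑ j, |A i j * (x (Sum.inl i) + x (Sum.inr j))| := by
          rw [signlessLaplacian_mulVec_inl, Real.norm_eq_abs]; exact abs_sum_le_sum_abs _ _
      _ ≤ (P *ᵥ 1) i * Φ := by
          simpa [mulVec, dotProduct, sum_mul] using sum_le_sum fun j _ => h i j
      _ ≤ max ‖P *ᵥ 1‖ ‖Pᵀ *ᵥ 1‖ * Φ := by
          gcongr
          exact (Real.le_norm_self _).trans ((norm_le_pi_norm _ i).trans (le_max_left _ _))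
  · calc ‖(signlessLaplacian A *ᵥ x) (Sum.inr j)‖
        ≤ ∑ i, |A i j * (x (Sum.inl i) + x (Sum.inr j))| := by
          rw [signlessLaplacian_mulVec_inr, Real.norm_eq_abs]; exact abs_sum_le_sum_abs _ _
      _ ≤ (Pᵀ *ᵥ 1) j * Φ := by
          simpa [mulVec, dotProduct, sum_mul] using sum_le_sum fun i _ => h i j
      _ ≤ max ‖P *ᵥ 1‖ ‖Pᵀ *ᵥ 1‖ * Φ := by
          gcongr
          exact (Real.le_norm_self _).trans ((norm_le_pi_norm _ j).trans (le_max_right _ _))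

end SignlessLaplacian

theorem mul_sub_le_of_sum_mul_sub_le {κ : Type*} [Fintype κ] {w y : κ → ℝ} {p t R : ℝ}
    (hp : 0 ≤ p) (hw : ∀ j, p ≤ w j) (hy : ∀ j, y j ≤ t) (h : ∑ j, w j * (t - y j) ≤ R)
    (j : κ) : p * (t - y j) ≤ R :=
  calc p * (t - y j) ≤ w j * (t - y j) := mul_le_mul_of_nonneg_right (hw j) (sub_nonneg.2 (hy j))
    _ ≤ ∑ k, w k * (t - y k) :=
      single_le_sum (fun k _ => mul_nonneg (hp.trans (hw k)) (sub_nonneg.2 (hy k))) (mem_univ j)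
    _ ≤ R := h

theorem card_mul_mul_sub_le_of_sum_mul_sub_le {κ : Type*} [Fintype κ] {w w' y : κ → ℝ}
    {p s t R : ℝ} (hw : ∀ j, p ≤ w j) (hw' : ∀ j, p ≤ w' j) (hs : ∀ j, s ≤ y j)
    (ht : ∀ j, y j ≤ t) (h : ∑ j, w j * (t - y j) ≤ R) (h' : ∑ j, w' j * (y j - s) ≤ R) :
    Fintype.card κ * (p * (t - s)) ≤ 2 * R :=
  calc Fintype.card κ * (p * (t - s)) = ∑ _j : κ, p * (t - s) := by simp
    _ ≤ ∑ j, (w j * (t - y j) + w' j * (y j - s)) := sum_le_sum fun j _ => by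
      nlinarith [hw j, hw' j, hs j, ht j]
    _ ≤ 2 * R := by rw [sum_add_distrib]; linarith

section Square

variable {ι : Type*} [Fintype ι] [DecidableEq ι]

/-- A maximum principle: the values of `z ∘ inl` and `-(z ∘ inr)` all lie in an interval of
length `‖signlessLaplacian P *ᵥ z‖ / p`. -/
theorem exists_norm_sub_sum_elim_const_neg_le [Nonempty ι] (P : Matrix ι ι ℝ) {p : ℝ} (hp : 0 < p)
    (hpP : ∀ i j, p ≤ P i j) (z : ι ⊕ ι → ℝ) :
    ∃ c : ℝ, ‖z - Sum.elim (fun _ => c) (fun _ => -c)‖ ≤ ‖signlessLaplacian P *ᵥ z‖ / (2 * p) := by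
  set R := ‖signlessLaplacian P *ᵥ z‖
  set w : ι ⊕ ι → ℝ := Sum.elim (z ∘ Sum.inl) (-(z ∘ Sum.inr))
  have hrow : ∀ i, |∑ j, P i j * (w (Sum.inl i) - w (Sum.inr j))| ≤ R := fun i => by
    simpa [w] using norm_le_pi_norm (signlessLaplacian P *ᵥ z) (Sum.inl i)
  have hcol : ∀ j, |∑ i, P i j * (w (Sum.inl i) - w (Sum.inr j))| ≤ R := fun j => by
    simpa [w] using norm_le_pi_norm (signlessLaplacian P *ᵥ z) (Sum.inr j)
  have hrow' : ∀ i, ∑ j, P i j * (w (Sum.inr j) - w (Sum.inl i)) ≤ R := fun i => by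
    simp only [← neg_sub (w (Sum.inl i)), mul_neg, sum_neg_distrib]
    exact neg_le.1 (abs_le.1 (hrow i)).1
  have hcol' : ∀ j, ∑ i, P i j * (w (Sum.inr j) - w (Sum.inl i)) ≤ R := fun j => by
    simp only [← neg_sub (w (Sum.inl _)), mul_neg, sum_neg_distrib]
    exact neg_le.1 (abs_le.1 (hcol j)).1
  obtain ⟨kmax, hmax⟩ := Finite.exists_max w
  obtain ⟨kmin, hmin⟩ := Finite.exists_min w
  have hR : 0 ≤ R := norm_nonneg _
  have hspread : p * (w kmax - w kmin) ≤ R := by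
    rcases kmax with i₁ | j₁ <;> rcases kmin with i₂ | j₂
    · rcases eq_or_ne i₁ i₂ with rfl | hne
      · simpa using hR
      -- averaging over at least two columns: this is where squareness of `P` enters
      have hcard : (2 : ℝ) ≤ Fintype.card ι := by
        exact_mod_cast Fintype.one_lt_card_iff.2 ⟨i₁, i₂, hne⟩
      have := card_mul_mul_sub_le_of_sum_mul_sub_le (hpP i₁) (hpP i₂) (fun j => hmin (Sum.inr j))
        (fun j => hmax (Sum.inr j)) (le_of_abs_le (hrow i₁)) (hrow' i₂)
      nlinarith [mul_nonneg hp.le (sub_nonneg.2 (hmin (Sum.inl i₁)))]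
    · exact mul_sub_le_of_sum_mul_sub_le hp.le (hpP i₁) (fun j => hmax (Sum.inr j))
        (le_of_abs_le (hrow i₁)) j₂
    · exact mul_sub_le_of_sum_mul_sub_le hp.le (fun i => hpP i j₁) (fun i => hmax (Sum.inl i))
        (hcol' j₁) i₂
    · rcases eq_or_ne j₁ j₂ with rfl | hne
      · simpa using hR
      have hcard : (2 : ℝ) ≤ Fintype.card ι := by
        exact_mod_cast Fintype.one_lt_card_iff.2 ⟨j₁, j₂, hne⟩
      have := card_mul_mul_sub_le_of_sum_mul_sub_le (fun i => hpP i j₁) (fun i => hpP i j₂)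
        (fun i => hmin (Sum.inl i)) (fun i => hmax (Sum.inl i)) (hcol' j₁) (le_of_abs_le (hcol j₂))
      nlinarith [mul_nonneg hp.le (sub_nonneg.2 (hmin (Sum.inr j₁)))]
  have hhalf : (w kmax - w kmin) / 2 ≤ R / (2 * p) := by
    rw [div_le_div_iff₀ two_pos (by positivity)]
    nlinarith
  refine ⟨(w kmax + w kmin) / 2, (pi_norm_le_iff_of_nonneg (by positivity)).2 fun k => ?_⟩
  have hk : |w k - (w kmax + w kmin) / 2| ≤ R / (2 * p) := by
    rw [abs_le]
    constructor <;> linarith [hmax k, hmin k]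
  rcases k with i | j
  · simpa [w] using hk
  · rw [← abs_neg] at hk
    simpa [w, add_comm] using hk

theorem exists_signlessLaplacian_mulVec_eq_norm_le {P : Matrix ι ι ℝ} (hP : ∀ i j, 0 < P i j)
    (z₀ : ι ⊕ ι → ℝ) :
    ∃ z, signlessLaplacian P *ᵥ z = signlessLaplacian P *ᵥ z₀ ∧
      ‖z‖ ≤ ‖signlessLaplacian P *ᵥ z₀‖ / (2 * ⨅ q : ι × ι, P q.1 q.2) := by
  cases isEmpty_or_nonempty ι
  · refine ⟨z₀, rfl, ?_⟩
    rw [Subsingleton.elim z₀ 0, norm_zero]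
    exact div_nonneg (norm_nonneg _) (mul_nonneg zero_le_two (Real.iInf_nonneg fun q => (hP _ _).le))
  obtain ⟨q, hq⟩ := Finite.exists_min fun q : ι × ι => P q.1 q.2
  have hpos : 0 < ⨅ q : ι × ι, P q.1 q.2 := (hP q.1 q.2).trans_le (le_ciInf hq)
  obtain ⟨c, hc⟩ := exists_norm_sub_sum_elim_const_neg_le P hpos
    (fun i j => ciInf_le (Set.finite_range _).bddBelow (i, j)) z₀
  exact ⟨_, by rw [mulVec_sub, signlessLaplacian_mulVec_sum_elim_const_neg, sub_zero], hc⟩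

end Square

theorem abs_one_sub_exp_le (s : ℝ) : |1 - exp s| ≤ exp |s| - 1 := by
  rcases le_or_gt 0 s with h | h
  · rw [abs_of_nonneg h, abs_sub_comm, abs_of_nonneg (by linarith [one_le_exp h])]
  · rw [abs_of_neg h, abs_of_nonneg (by linarith [exp_lt_one_iff.2 h])]
    nlinarith [add_one_le_exp s, add_one_le_exp (-s)]

theorem exp_mul_le_one_add_mul_exp_sub_one {δ : ℝ} (hδ₀ : 0 ≤ δ) (hδ₁ : δ ≤ 1) (t : ℝ) :
    exp (δ * t) ≤ 1 + δ * (exp t - 1) := by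
  have := convexOn_exp.2 (Set.mem_univ 0) (Set.mem_univ t) (sub_nonneg.2 hδ₁) hδ₀ (by ring)
  simp only [smul_eq_mul, mul_zero, zero_add, exp_zero, mul_one] at this
  linarith

theorem abs_sub_mul_exp_div_mul_le {a ε δ s : ℝ} (ha : 0 ≤ a) (hε : 0 < ε) (hδ : δ ≤ 1)
    (hs : |s| ≤ 2 * δ) :
    |(a - a * exp (s / ε)) * s| ≤ a * (2 * δ ^ 2 * (exp (2 / ε) - 1)) := by
  have hδ₀ : 0 ≤ δ := by linarith [abs_nonneg s]
  have hexp : |1 - exp (s / ε)| ≤ δ * (exp (2 / ε) - 1) :=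
    calc |1 - exp (s / ε)| ≤ exp |s / ε| - 1 := abs_one_sub_exp_le _
      _ ≤ exp (δ * (2 / ε)) - 1 := by
        gcongr
        rw [abs_div, abs_of_pos hε, mul_div_assoc', mul_comm]
        gcongr
      _ ≤ δ * (exp (2 / ε) - 1) := by linarith [exp_mul_le_one_add_mul_exp_sub_one hδ₀ hδ (2 / ε)]
  rw [← mul_one_sub, mul_assoc, abs_mul, abs_of_nonneg ha, abs_mul]
  refine mul_le_mul_of_nonneg_left ?_ ha
  calc |1 - exp (s / ε)| * |s| ≤ δ * (exp (2 / ε) - 1) * (2 * δ) :=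
        mul_le_mul hexp hs (abs_nonneg _) (le_trans (abs_nonneg _) hexp)
    _ = 2 * δ ^ 2 * (exp (2 / ε) - 1) := by ring

theorem sq_sub_one_mul_le {u m : ℝ} (hu : 1 ≤ u) (hm : 0 ≤ m) :
    (u ^ 2 - 1) * m ≤ (u - 1) * (1 + 2 * u * m) := by
  nlinarith [mul_nonneg (sub_nonneg.2 hu) (mul_nonneg (sub_nonneg.2 hu) hm)]

/-- Quadratic-convergence estimate for the Sinkhorn--Newton method (`m = n`):
for `η = (α, β)` with `‖(f,g) − (α,β)‖_∞ ≤ 1`, the linear system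
`J_F(f,g) z = [J_F(f,g) − J_F(α,β)] ((f,g) − (α,β))` admits a solution `z` with
`‖z‖_∞ ≤ ω ‖(f,g) − (α,β)‖_∞²`, where
`ω = (e^{1/ε} − 1)(1 + 2 e^{1/ε} max{‖P 1‖_∞, ‖Pᵀ 1‖_∞} / min_{ij} P_{ij})`. -/
theorem sinkhorn_newton_quadratic_estimate (n : ℕ) (C : Matrix (Fin n) (Fin n) ℝ)
    (ε : ℝ) (hε : 0 < ε) (f g α β : Fin n → ℝ)
    (hclose : ‖Sum.elim (f - α) (g - β)‖ ≤ 1) :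
    let Pm : (Fin n → ℝ) → (Fin n → ℝ) → Matrix (Fin n) (Fin n) ℝ :=
      fun u v i j => Real.exp (-u i / ε) * Real.exp (-C i j / ε) * Real.exp (-v j / ε)
    let J : (Fin n → ℝ) → (Fin n → ℝ) → Matrix (Fin n ⊕ Fin n) (Fin n ⊕ Fin n) ℝ :=
      fun u v =>
        (1 / ε) • Matrix.fromBlocks (Matrix.diagonal (Pm u v *ᵥ 1)) (Pm u v)
          (Pm u v)ᵀ (Matrix.diagonal ((Pm u v)ᵀ *ᵥ 1))
    let P : Matrix (Fin n) (Fin n) ℝ := Pm f g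
    let ω : ℝ :=
      (Real.exp (1 / ε) - 1) *
        (1 + 2 * Real.exp (1 / ε) *
          (max ‖P *ᵥ (1 : Fin n → ℝ)‖ ‖Pᵀ *ᵥ (1 : Fin n → ℝ)‖ /
            ⨅ p : Fin n × Fin n, P p.1 p.2))
    ∃ z : Fin n ⊕ Fin n → ℝ,
      J f g *ᵥ z = (J f g - J α β) *ᵥ Sum.elim (f - α) (g - β) ∧
      ‖z‖ ≤ ω * ‖Sum.elim (f - α) (g - β)‖ ^ 2 := by
  intro Pm J P ω
  set d := Sum.elim (f - α) (g - β)
  set δ := ‖d‖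
  set M := max ‖P *ᵥ 1‖ ‖Pᵀ *ᵥ 1‖
  set p := ⨅ q : Fin n × Fin n, P q.1 q.2
  have hP : ∀ i j, 0 < P i j := fun i j => by positivity
  have hJ : ∀ u v, J u v = (1 / ε) • signlessLaplacian (Pm u v) := fun _ _ => rfl
  have hPm : ∀ i j, Pm α β i j = P i j * exp ((d (Sum.inl i) + d (Sum.inr j)) / ε) := by
    intro i j
    simp only [Pm, P, d, Sum.elim_inl, Sum.elim_inr, Pi.sub_apply, ← exp_add]
    ring_nf
  obtain ⟨z₀, hz₀⟩ := exists_signlessLaplacian_mulVec_eq hP (P - Pm α β) d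
  obtain ⟨z, hz, hz_norm⟩ := exists_signlessLaplacian_mulVec_eq_norm_le hP z₀
  refine ⟨z, ?_, ?_⟩
  · rw [hJ, hJ, ← smul_sub, ← signlessLaplacian_sub, smul_mulVec, smul_mulVec, hz, hz₀]
  have hentry : ∀ i j, |(P - Pm α β) i j * (d (Sum.inl i) + d (Sum.inr j))| ≤
      P i j * (2 * δ ^ 2 * (exp (2 / ε) - 1)) := fun i j => by
    rw [Matrix.sub_apply, hPm]
    refine abs_sub_mul_exp_div_mul_le (hP i j).le hε hclose ?_
    rw [two_mul]
    exact (abs_add_le _ _).trans (add_le_add (norm_le_pi_norm d _) (norm_le_pi_norm d _))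
  have hr := norm_signlessLaplacian_mulVec_le
    (mul_nonneg (by positivity) (sub_nonneg.2 (one_le_exp (by positivity)))) hentry
  have hu : exp (2 / ε) = exp (1 / ε) ^ 2 := by rw [← exp_nat_mul]; ring_nf
  have hp : 0 ≤ p := Real.iInf_nonneg fun q => (hP q.1 q.2).le
  calc ‖z‖ ≤ M * (2 * δ ^ 2 * (exp (2 / ε) - 1)) / (2 * p) :=
        hz_norm.trans (div_le_div_of_nonneg_right (hz₀ ▸ hr) (by positivity))
    _ = (exp (1 / ε) ^ 2 - 1) * (M / p) * δ ^ 2 := by rw [hu]; ring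
    _ ≤ ω * δ ^ 2 := mul_le_mul_of_nonneg_right (sq_sub_one_mul_le (one_le_exp (by positivity))
        (div_nonneg (le_max_of_le_left (norm_nonneg _)) hp)) (sq_nonneg δ)
end

section
/- Let f, g ∈ ℝ^n and φ ∈ ℝ^n, and set η := (f − φ, g). Then the vector z := ((e^{φ/ε} − 1) ⊙ φ, 0) ∈ ℝ^n × ℝ^m (where e^{φ/ε} − 1 is taken componentwise and ⊙ is the componentwise product) satisfies the linear system J_F(f,g) z = [J_F(f − φ, g) − J_F(f,g)] (φ, 0). -/
open Matrix

/-
Scaling the first potential by `f ↦ f - φ` multiplies the Gibbs coupling on the left by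
`diagonal (e^{φ/ε})`. Applied to a vector `(x, 0)`, the Jacobian block matrix of `diagonal s * P`
acts like that of `P` applied to `(s ⊙ x, 0)`, since both row sums and the transposed product only
see `s` through `s ⊙ x`. Taking the difference with `s = e^{φ/ε}` gives `z`.
-/

section CouplingJacobian

variable {R ι κ : Type*} [Fintype ι] [Fintype κ] [DecidableEq ι] [DecidableEq κ]

theorem diagonal_mulVec_eq_mul [NonUnitalNonAssocSemiring R] (v w : ι → R) :
    diagonal v *ᵥ w = v * w :=
  funext (mulVec_diagonal v w)

def couplingJacobian [NonAssocSemiring R] (P : Matrix ι κ R) : Matrix (ι ⊕ κ) (ι ⊕ κ) R :=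
  fromBlocks (diagonal (P *ᵥ 1)) P Pᵀ (diagonal (Pᵀ *ᵥ 1))

theorem couplingJacobian_mulVec_inl [NonAssocSemiring R] (P : Matrix ι κ R) (x : ι → R) :
    couplingJacobian P *ᵥ Sum.elim x 0 = Sum.elim ((P *ᵥ 1) * x) (Pᵀ *ᵥ x) := by
  simp only [couplingJacobian, fromBlocks_mulVec, Sum.elim_comp_inl, Sum.elim_comp_inr,
    mulVec_zero, add_zero, diagonal_mulVec_eq_mul]

theorem couplingJacobian_diagonal_mul_mulVec_inl [CommSemiring R] (s : ι → R)
    (P : Matrix ι κ R) (x : ι → R) :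
    couplingJacobian (diagonal s * P) *ᵥ Sum.elim x 0 =
      couplingJacobian P *ᵥ Sum.elim (s * x) 0 := by
  rw [couplingJacobian_mulVec_inl, couplingJacobian_mulVec_inl, ← mulVec_mulVec,
    diagonal_mulVec_eq_mul, transpose_mul, diagonal_transpose, ← mulVec_mulVec,
    diagonal_mulVec_eq_mul, mul_comm s, mul_assoc]

theorem couplingJacobian_diagonal_mul_sub_mulVec_inl [CommRing R] (s : ι → R)
    (P : Matrix ι κ R) (x : ι → R) :
    (couplingJacobian (diagonal s * P) - couplingJacobian P) *ᵥ Sum.elim x 0 =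
      couplingJacobian P *ᵥ Sum.elim ((s - 1) * x) 0 := by
  rw [sub_mulVec, couplingJacobian_diagonal_mul_mulVec_inl, ← mulVec_sub, sub_mul, one_mul,
    ← Sum.elim_sub_sub, sub_zero]

end CouplingJacobian

noncomputable def gibbsCoupling {n m : Type*} (C : Matrix n m ℝ) (ε : ℝ) (u : n → ℝ)
    (v : m → ℝ) : Matrix n m ℝ :=
  fun i j => Real.exp (-u i / ε) * Real.exp (-C i j / ε) * Real.exp (-v j / ε)

theorem gibbsCoupling_sub_left {n m : Type*} [Fintype n] [DecidableEq n] (C : Matrix n m ℝ)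
    (ε : ℝ) (u φ : n → ℝ) (v : m → ℝ) :
    gibbsCoupling C ε (u - φ) v =
      diagonal (fun i => Real.exp (φ i / ε)) * gibbsCoupling C ε u v := by
  ext i j
  simp only [gibbsCoupling, diagonal_mul, Pi.sub_apply, ← Real.exp_add]
  ring_nf

theorem explicit_newton_correction_general (n m : ℕ) (C : Matrix (Fin n) (Fin m) ℝ)
    (ε : ℝ) (f : Fin n → ℝ) (g : Fin m → ℝ) (φ : Fin n → ℝ) :
    let Jm : (Fin n → ℝ) → (Fin m → ℝ) → Matrix (Fin n ⊕ Fin m) (Fin n ⊕ Fin m) ℝ :=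
      fun u v =>
        let P : Matrix (Fin n) (Fin m) ℝ :=
          fun i j => Real.exp (-u i / ε) * Real.exp (-C i j / ε) * Real.exp (-v j / ε)
        (1 / ε) • Matrix.fromBlocks (Matrix.diagonal (P *ᵥ 1)) P
          Pᵀ (Matrix.diagonal (Pᵀ *ᵥ 1))
    let z : Fin n ⊕ Fin m → ℝ :=
      Sum.elim (fun i => (Real.exp (φ i / ε) - 1) * φ i) (fun _ => (0 : ℝ))
    Jm f g *ᵥ z = (Jm (f - φ) g - Jm f g) *ᵥ Sum.elim φ (fun _ => (0 : ℝ)) := by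
  intro Jm z
  change ((1 / ε) • couplingJacobian (gibbsCoupling C ε f g)) *ᵥ
      Sum.elim (((fun i => Real.exp (φ i / ε)) - 1) * φ) 0 =
    ((1 / ε) • couplingJacobian (gibbsCoupling C ε (f - φ) g) -
      (1 / ε) • couplingJacobian (gibbsCoupling C ε f g)) *ᵥ Sum.elim φ 0
  rw [← smul_sub, smul_mulVec, smul_mulVec, gibbsCoupling_sub_left,
    couplingJacobian_diagonal_mul_sub_mulVec_inl]

/-- With `η := (f − φ, g)`, the vector `z := ((e^{φ/ε} − 1) ⊙ φ, 0)` solves the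
linear system `J_F(f,g) z = [J_F(f − φ, g) − J_F(f,g)] (φ, 0)`. -/
theorem explicit_newton_correction (n m : ℕ) (C : Matrix (Fin n) (Fin m) ℝ)
    (ε : ℝ) (hε : 0 < ε) (f : Fin n → ℝ) (g : Fin m → ℝ) (φ : Fin n → ℝ) :
    let Jm : (Fin n → ℝ) → (Fin m → ℝ) → Matrix (Fin n ⊕ Fin m) (Fin n ⊕ Fin m) ℝ :=
      fun u v =>
        let P : Matrix (Fin n) (Fin m) ℝ :=
          fun i j => Real.exp (-u i / ε) * Real.exp (-C i j / ε) * Real.exp (-v j / ε)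
        (1 / ε) • Matrix.fromBlocks (Matrix.diagonal (P *ᵥ 1)) P
          Pᵀ (Matrix.diagonal (Pᵀ *ᵥ 1))
    let z : Fin n ⊕ Fin m → ℝ :=
      Sum.elim (fun i => (Real.exp (φ i / ε) - 1) * φ i) (fun _ => (0 : ℝ))
    Jm f g *ᵥ z = (Jm (f - φ) g - Jm f g) *ᵥ Sum.elim φ (fun _ => (0 : ℝ)) :=
  explicit_newton_correction_general n m C ε f g φ
end

section
/- Let f, g ∈ ℝ^n × ℝ^m and η = (α, β) ∈ ℝ^n × ℝ^m, and write (φ, γ) := (f − α, g − β) and P := P(f,g). Then the difference of Jacobians applied to (φ, γ) satisfies componentwise: the i-th of the first n components of [J_F(α,β) − J_F(f,g)](φ, γ) equals (1/ε) Σ_j P_{ij} (e^{(φ_i + γ_j)/ε} − 1)(φ_i + γ_j), and the j-th of the last m components equals (1/ε) Σ_i P_{ij} (e^{(φ_i + γ_j)/ε} − 1)(φ_i + γ_j). -/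
/-!
`J_F(f, g)` is `1/ε` times the signless Laplacian of the complete bipartite graph weighted by
`P(f, g)`, which sends `(φ, γ)` to `(Σ_j P_ij (φ_i + γ_j))_i` and `(Σ_i P_ij (φ_i + γ_j))_j`.
This Laplacian is linear in the weights, and `P(α, β)_ij = P(f, g)_ij e^{(φ_i + γ_j)/ε}`, so the
difference of Jacobians is the Laplacian weighted by `P(f, g)_ij (e^{(φ_i + γ_j)/ε} - 1)`.
-/

open Matrix

section BipartiteSignlessLaplacian

variable {R ι κ : Type*} [Fintype ι] [Fintype κ] [DecidableEq ι] [DecidableEq κ]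

def bipartiteSignlessLaplacian [NonAssocSemiring R] (Q : Matrix ι κ R) :
    Matrix (ι ⊕ κ) (ι ⊕ κ) R :=
  fromBlocks (diagonal (Q *ᵥ 1)) Q Qᵀ (diagonal (Qᵀ *ᵥ 1))

theorem bipartiteSignlessLaplacian_sub [Ring R] (Q Q' : Matrix ι κ R) :
    bipartiteSignlessLaplacian (Q - Q') =
      bipartiteSignlessLaplacian Q - bipartiteSignlessLaplacian Q' := by
  ext (i | i) (j | j) <;>
    simp [bipartiteSignlessLaplacian, sub_mulVec, diagonal_apply, ite_sub_ite]

variable [NonAssocSemiring R]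

theorem bipartiteSignlessLaplacian_mulVec_inl (Q : Matrix ι κ R) (φ : ι → R) (γ : κ → R)
    (i : ι) :
    (bipartiteSignlessLaplacian Q *ᵥ Sum.elim φ γ) (Sum.inl i) = ∑ j, Q i j * (φ i + γ j) := by
  rw [bipartiteSignlessLaplacian, fromBlocks_mulVec, Sum.elim_inl, Pi.add_apply,
    Sum.elim_comp_inl, Sum.elim_comp_inr, mulVec_diagonal]
  simp only [mulVec, dotProduct, Pi.one_apply, mul_one, Finset.sum_mul, mul_add,
    Finset.sum_add_distrib]

theorem bipartiteSignlessLaplacian_mulVec_inr (Q : Matrix ι κ R) (φ : ι → R) (γ : κ → R)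
    (j : κ) :
    (bipartiteSignlessLaplacian Q *ᵥ Sum.elim φ γ) (Sum.inr j) = ∑ i, Q i j * (φ i + γ j) := by
  rw [bipartiteSignlessLaplacian, fromBlocks_mulVec, Sum.elim_inr, Pi.add_apply,
    Sum.elim_comp_inl, Sum.elim_comp_inr, mulVec_diagonal]
  simp only [mulVec, dotProduct, transpose_apply, Pi.one_apply, mul_one, Finset.sum_mul,
    mul_add, Finset.sum_add_distrib]

end BipartiteSignlessLaplacian

theorem Real.exp_neg_div_mul_mul_exp_neg_div_shift (a b x y k ε : ℝ) :
    Real.exp (-a / ε) * k * Real.exp (-b / ε) =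
      Real.exp (-x / ε) * k * Real.exp (-y / ε) * Real.exp ((x - a + (y - b)) / ε) := by
  have hsplit : -a / ε + -b / ε = -x / ε + -y / ε + (x - a + (y - b)) / ε := by ring
  calc Real.exp (-a / ε) * k * Real.exp (-b / ε)
      = k * Real.exp (-a / ε + -b / ε) := by rw [Real.exp_add]; ring
    _ = _ := by rw [hsplit, Real.exp_add, Real.exp_add]; ring

theorem jacobian_difference_componentwise_general (n m : ℕ) (C : Matrix (Fin n) (Fin m) ℝ)
    (ε : ℝ) (f α : Fin n → ℝ) (g β : Fin m → ℝ) :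
    let Jm : (Fin n → ℝ) → (Fin m → ℝ) → Matrix (Fin n ⊕ Fin m) (Fin n ⊕ Fin m) ℝ :=
      fun u v =>
        let Q : Matrix (Fin n) (Fin m) ℝ :=
          fun i j => Real.exp (-u i / ε) * Real.exp (-C i j / ε) * Real.exp (-v j / ε)
        (1 / ε) • Matrix.fromBlocks (Matrix.diagonal (Q *ᵥ 1)) Q
          Qᵀ (Matrix.diagonal (Qᵀ *ᵥ 1))
    let P : Matrix (Fin n) (Fin m) ℝ :=
      fun i j => Real.exp (-f i / ε) * Real.exp (-C i j / ε) * Real.exp (-g j / ε)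
    let φ : Fin n → ℝ := f - α
    let γ : Fin m → ℝ := g - β
    (∀ i : Fin n,
        ((Jm α β - Jm f g) *ᵥ Sum.elim φ γ) (Sum.inl i) =
          (1 / ε) * ∑ j : Fin m,
            P i j * (Real.exp ((φ i + γ j) / ε) - 1) * (φ i + γ j)) ∧
      (∀ j : Fin m,
        ((Jm α β - Jm f g) *ᵥ Sum.elim φ γ) (Sum.inr j) =
          (1 / ε) * ∑ i : Fin n,
            P i j * (Real.exp ((φ i + γ j) / ε) - 1) * (φ i + γ j)) := by
  intro Jm P φ γ
  let Pαβ : Matrix (Fin n) (Fin m) ℝ :=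
    fun i j => Real.exp (-α i / ε) * Real.exp (-C i j / ε) * Real.exp (-β j / ε)
  have hJ : Jm α β - Jm f g = (1 / ε) • bipartiteSignlessLaplacian (Pαβ - P) := by
    rw [bipartiteSignlessLaplacian_sub, smul_sub]
    rfl
  have hP : ∀ i j, (Pαβ - P) i j = P i j * (Real.exp ((φ i + γ j) / ε) - 1) := fun i j => by
    rw [mul_sub_one, Matrix.sub_apply]
    congr 1
    exact Real.exp_neg_div_mul_mul_exp_neg_div_shift (α i) (β j) (f i) (g j) _ ε
  refine ⟨fun i => ?_, fun j => ?_⟩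
  · rw [hJ, smul_mulVec, Pi.smul_apply, bipartiteSignlessLaplacian_mulVec_inl, smul_eq_mul]
    simp only [hP]
  · rw [hJ, smul_mulVec, Pi.smul_apply, bipartiteSignlessLaplacian_mulVec_inr, smul_eq_mul]
    simp only [hP]

/-- Componentwise formula for the difference of Jacobians applied to
`(φ, γ) := (f − α, g − β)`:
the `i`-th of the first `n` components of `[J_F(α,β) − J_F(f,g)](φ, γ)` equals
`(1/ε) Σ_j P_{ij} (e^{(φ_i + γ_j)/ε} − 1)(φ_i + γ_j)`, and the `j`-th of the last `m`
components equals `(1/ε) Σ_i P_{ij} (e^{(φ_i + γ_j)/ε} − 1)(φ_i + γ_j)`. -/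
theorem jacobian_difference_componentwise (n m : ℕ) (C : Matrix (Fin n) (Fin m) ℝ)
    (ε : ℝ) (hε : 0 < ε) (f α : Fin n → ℝ) (g β : Fin m → ℝ) :
    let Jm : (Fin n → ℝ) → (Fin m → ℝ) → Matrix (Fin n ⊕ Fin m) (Fin n ⊕ Fin m) ℝ :=
      fun u v =>
        let Q : Matrix (Fin n) (Fin m) ℝ :=
          fun i j => Real.exp (-u i / ε) * Real.exp (-C i j / ε) * Real.exp (-v j / ε)
        (1 / ε) • Matrix.fromBlocks (Matrix.diagonal (Q *ᵥ 1)) Q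
          Qᵀ (Matrix.diagonal (Qᵀ *ᵥ 1))
    let P : Matrix (Fin n) (Fin m) ℝ :=
      fun i j => Real.exp (-f i / ε) * Real.exp (-C i j / ε) * Real.exp (-g j / ε)
    let φ : Fin n → ℝ := f - α
    let γ : Fin m → ℝ := g - β
    (∀ i : Fin n,
        ((Jm α β - Jm f g) *ᵥ Sum.elim φ γ) (Sum.inl i) =
          (1 / ε) * ∑ j : Fin m,
            P i j * (Real.exp ((φ i + γ j) / ε) - 1) * (φ i + γ j)) ∧
      (∀ j : Fin m,
        ((Jm α β - Jm f g) *ᵥ Sum.elim φ γ) (Sum.inr j) =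
          (1 / ε) * ∑ i : Fin n,
            P i j * (Real.exp ((φ i + γ j) / ε) - 1) * (φ i + γ j)) :=
  jacobian_difference_componentwise_general n m C ε f α g β
end

section
/- Let m = n, let P ∈ ℝ^{n×n} have all entries positive, set Δ := min_{i,j} P_{ij}, q := (1_n, −1_n) ∈ ℝ^{2n}, and A := [[diag(P 1_n), P], [Pᵀ, diag(Pᵀ 1_n)]]. Then the matrix B := A + Δ q qᵀ is invertible and its inverse satisfies the operator ℓ_∞-norm bound ‖B^{−1}‖_∞ ≤ 1 / (2 min_{i,j} P_{ij}). -/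
open Matrix

attribute [local instance] Matrix.linftyOpNormedAddCommGroup

/-- Lower bound `c * ‖v‖ ≤ ‖M *ᵥ v‖` for a strictly diagonally dominant matrix with row gap
at least `c`. -/
lemma sdd_mulVec_lower {ι : Type*} [Fintype ι] [Nonempty ι] [DecidableEq ι]
    (M : Matrix ι ι ℝ) (c : ℝ)
    (h : ∀ k, c ≤ |M k k| - ∑ j ∈ Finset.univ.erase k, |M k j|)
    (v : ι → ℝ) : c * ‖v‖ ≤ ‖M *ᵥ v‖ := by
  obtain ⟨k, -, hk⟩ := Finset.exists_max_image Finset.univ (fun i => |v i|)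
    ⟨Classical.arbitrary ι, Finset.mem_univ _⟩
  have hk' : ∀ i, |v i| ≤ |v k| := fun i => hk i (Finset.mem_univ _)
  have hnv : ‖v‖ = |v k| := by
    apply le_antisymm
    · apply (pi_norm_le_iff_of_nonneg (abs_nonneg _)).2
      intro i; simpa [Real.norm_eq_abs] using hk' i
    · simpa [Real.norm_eq_abs] using norm_le_pi_norm v k
  have habs : ∀ a b : ℝ, |a| - |b| ≤ |a + b| := by
    intro a b
    have h := abs_add_le (a + b) (-b)
    rw [add_neg_cancel_right, abs_neg] at h
    linarith
  have h1 : (M *ᵥ v) k = M k k * v k + ∑ j ∈ Finset.univ.erase k, M k j * v j := by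
    rw [Matrix.mulVec, dotProduct, ← Finset.add_sum_erase _ _ (Finset.mem_univ k)]
  have h2 : |∑ j ∈ Finset.univ.erase k, M k j * v j|
      ≤ (∑ j ∈ Finset.univ.erase k, |M k j|) * |v k| := by
    calc |∑ j ∈ Finset.univ.erase k, M k j * v j|
        ≤ ∑ j ∈ Finset.univ.erase k, |M k j * v j| := Finset.abs_sum_le_sum_abs _ _
      _ = ∑ j ∈ Finset.univ.erase k, |M k j| * |v j| := by simp [abs_mul]
      _ ≤ ∑ j ∈ Finset.univ.erase k, |M k j| * |v k| :=
          Finset.sum_le_sum fun j _ => mul_le_mul_of_nonneg_left (hk' j) (abs_nonneg _)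
      _ = (∑ j ∈ Finset.univ.erase k, |M k j|) * |v k| := by rw [Finset.sum_mul]
  have h3 : c * |v k| ≤ |(M *ᵥ v) k| := by
    have hc := mul_le_mul_of_nonneg_right (h k) (abs_nonneg (v k))
    have h4 := habs (M k k * v k) (∑ j ∈ Finset.univ.erase k, M k j * v j)
    rw [← h1] at h4
    have h5 : |M k k * v k| = |M k k| * |v k| := abs_mul _ _
    nlinarith [abs_nonneg ((M *ᵥ v) k)]
  calc c * ‖v‖ = c * |v k| := by rw [hnv]
    _ ≤ |(M *ᵥ v) k| := h3
    _ ≤ ‖M *ᵥ v‖ := by simpa [Real.norm_eq_abs] using norm_le_pi_norm (M *ᵥ v) k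

/-- If every absolute row sum is at most `c`, then the `ℓ∞` operator norm is at most `c`. -/
lemma linfty_norm_le_of_rows {ι κ : Type*} [Fintype ι] [Fintype κ] (M : Matrix ι κ ℝ) {c : ℝ}
    (hc : 0 ≤ c) (h : ∀ i, ∑ j, |M i j| ≤ c) : ‖M‖ ≤ c := by
  rw [Matrix.linfty_opNorm_def, ← Real.coe_toNNReal c hc, NNReal.coe_le_coe]
  apply Finset.sup_le
  intro i _
  rw [← NNReal.coe_le_coe, NNReal.coe_sum, Real.coe_toNNReal c hc]
  simpa [Real.norm_eq_abs] using h i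

/-- For a positive matrix `P`, with `Δ := min_{ij} P_{ij}`, `q := (1_n, −1_n)` and
`A := [[diag(P 1), P], [Pᵀ, diag(Pᵀ 1)]]`, the matrix `B := A + Δ q qᵀ` is invertible
and `‖B⁻¹‖_∞ ≤ 1 / (2 min_{ij} P_{ij})` in the operator norm induced by the
`ℓ_∞` vector norm (the maximum absolute row sum norm). -/
theorem shifted_jacobian_inverse_bound (n : ℕ) (P : Matrix (Fin n) (Fin n) ℝ)
    (hP : ∀ i j, 0 < P i j) :
    let Δ : ℝ := ⨅ p : Fin n × Fin n, P p.1 p.2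
    let q : Fin n ⊕ Fin n → ℝ := Sum.elim (fun _ => (1 : ℝ)) (fun _ => (-1 : ℝ))
    let A : Matrix (Fin n ⊕ Fin n) (Fin n ⊕ Fin n) ℝ :=
      Matrix.fromBlocks (Matrix.diagonal (P *ᵥ 1)) P Pᵀ (Matrix.diagonal (Pᵀ *ᵥ 1))
    let B : Matrix (Fin n ⊕ Fin n) (Fin n ⊕ Fin n) ℝ := A + Δ • Matrix.vecMulVec q q
    IsUnit B ∧ ‖B⁻¹‖ ≤ 1 / (2 * ⨅ p : Fin n × Fin n, P p.1 p.2) := by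
  intro Δ q A B
  rcases Nat.eq_zero_or_pos n with hn | hn
  · subst hn
    have hB1 : B = 1 := Subsingleton.elim _ _
    refine ⟨hB1 ▸ isUnit_one, ?_⟩
    have h0 : ‖B⁻¹‖ = 0 := by
      rw [Matrix.linfty_opNorm_def]; simp
    rw [h0, Real.iInf_of_isEmpty]
    norm_num
  · have hι : Nonempty (Fin n) := ⟨⟨0, hn⟩⟩
    have hΔle : ∀ i j, Δ ≤ P i j := fun i j =>
      ciInf_le (Finite.bddBelow_range _) (i, j)
    have hΔpos : 0 < Δ := by
      obtain ⟨p, -, hp⟩ := Finset.exists_min_image Finset.univ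
        (fun p : Fin n × Fin n => P p.1 p.2) ⟨Classical.arbitrary _, Finset.mem_univ _⟩
      exact lt_of_lt_of_le (hP p.1 p.2) (le_ciInf fun b => hp b (Finset.mem_univ _))
    have hBe : ∀ k l, B k l = A k l + Δ * (q k * q l) := by
      intro k l
      simp [B, Matrix.add_apply, Matrix.smul_apply, Matrix.vecMulVec_apply, smul_eq_mul]
    have hS : ∀ i, (P *ᵥ (1 : Fin n → ℝ)) i = ∑ j, P i j := by
      intro i; simp [Matrix.mulVec, dotProduct]
    have hT : ∀ i, (Pᵀ *ᵥ (1 : Fin n → ℝ)) i = ∑ j, P j i := by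
      intro i; simp [Matrix.mulVec, dotProduct, Matrix.transpose_apply]
    have hB11 : ∀ i j, B (Sum.inl i) (Sum.inl j) = Matrix.diagonal (P *ᵥ 1) i j + Δ := by
      intro i j; rw [hBe]; simp [A, q]
    have hB12 : ∀ i j, B (Sum.inl i) (Sum.inr j) = P i j - Δ := by
      intro i j; rw [hBe]; simp [A, q]; ring
    have hB21 : ∀ i j, B (Sum.inr i) (Sum.inl j) = P j i - Δ := by
      intro i j; rw [hBe]; simp [A, q]; ring
    have hB22 : ∀ i j, B (Sum.inr i) (Sum.inr j) = Matrix.diagonal (Pᵀ *ᵥ 1) i j + Δ := by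
      intro i j; rw [hBe]; simp [A, q]
    have key : ∀ k, 2 * Δ ≤ |B k k| - ∑ j ∈ Finset.univ.erase k, |B k j| := by
      intro k
      rw [Finset.sum_erase_eq_sub (Finset.mem_univ k)]
      cases k with
      | inl i =>
        have hSpos : 0 < ∑ j, P i j :=
          Finset.sum_pos (fun j _ => hP i j) Finset.univ_nonempty
        have hdiag : B (Sum.inl i) (Sum.inl i) = (∑ j, P i j) + Δ := by
          rw [hB11, Matrix.diagonal_apply_eq, hS]
        have h1 : ∑ j : Fin n, |B (Sum.inl i) (Sum.inl j)|
            = (∑ j, P i j) + n * Δ := by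
          have he : ∀ j, |B (Sum.inl i) (Sum.inl j)| = Matrix.diagonal (P *ᵥ 1) i j + Δ := by
            intro j
            rw [hB11, abs_of_nonneg]
            have hd : 0 ≤ Matrix.diagonal (P *ᵥ 1) i j := by
              rcases eq_or_ne i j with h | h
              · rw [h, Matrix.diagonal_apply_eq, hS]
                exact Finset.sum_nonneg fun k _ => (hP j k).le
              · rw [Matrix.diagonal_apply_ne _ h]
            linarith
          rw [Finset.sum_congr rfl fun j _ => he j, Finset.sum_add_distrib]
          have : ∑ j : Fin n, Matrix.diagonal (P *ᵥ 1) i j = ∑ j, P i j := by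
            simp [Matrix.diagonal_apply, hS]
          rw [this]
          simp [Finset.card_univ, mul_comm]
        have h2 : ∑ j : Fin n, |B (Sum.inl i) (Sum.inr j)|
            = (∑ j, P i j) - n * Δ := by
          have he : ∀ j, |B (Sum.inl i) (Sum.inr j)| = P i j - Δ := fun j => by
            rw [hB12, abs_of_nonneg (by linarith [hΔle i j])]
          rw [Finset.sum_congr rfl fun j _ => he j, Finset.sum_sub_distrib]
          simp [Finset.card_univ, mul_comm]
        have hsum : ∑ j, |B (Sum.inl i) j| = 2 * ∑ j, P i j := by
          rw [Fintype.sum_sum_type, h1, h2]; ring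
        rw [hsum, hdiag, abs_of_pos (by linarith)]
        linarith
      | inr i =>
        have hSpos : 0 < ∑ j, P j i :=
          Finset.sum_pos (fun j _ => hP j i) Finset.univ_nonempty
        have hdiag : B (Sum.inr i) (Sum.inr i) = (∑ j, P j i) + Δ := by
          rw [hB22, Matrix.diagonal_apply_eq, hT]
        have h1 : ∑ j : Fin n, |B (Sum.inr i) (Sum.inr j)|
            = (∑ j, P j i) + n * Δ := by
          have he : ∀ j, |B (Sum.inr i) (Sum.inr j)| = Matrix.diagonal (Pᵀ *ᵥ 1) i j + Δ := by
            intro j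
            rw [hB22, abs_of_nonneg]
            have hd : 0 ≤ Matrix.diagonal (Pᵀ *ᵥ 1) i j := by
              rcases eq_or_ne i j with h | h
              · rw [h, Matrix.diagonal_apply_eq, hT]
                exact Finset.sum_nonneg fun k _ => (hP k j).le
              · rw [Matrix.diagonal_apply_ne _ h]
            linarith
          rw [Finset.sum_congr rfl fun j _ => he j, Finset.sum_add_distrib]
          have : ∑ j : Fin n, Matrix.diagonal (Pᵀ *ᵥ 1) i j = ∑ j, P j i := by
            simp [Matrix.diagonal_apply, hT]
          rw [this]
          simp [Finset.card_univ, mul_comm]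
        have h2 : ∑ j : Fin n, |B (Sum.inr i) (Sum.inl j)|
            = (∑ j, P j i) - n * Δ := by
          have he : ∀ j, |B (Sum.inr i) (Sum.inl j)| = P j i - Δ := fun j => by
            rw [hB21, abs_of_nonneg (by linarith [hΔle j i])]
          rw [Finset.sum_congr rfl fun j _ => he j, Finset.sum_sub_distrib]
          simp [Finset.card_univ, mul_comm]
        have hsum : ∑ j, |B (Sum.inr i) j| = 2 * ∑ j, P j i := by
          rw [Fintype.sum_sum_type, h1, h2]; ring
        rw [hsum, hdiag, abs_of_pos (by linarith)]
        linarith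
    have hlow : ∀ v, (2 * Δ) * ‖v‖ ≤ ‖B *ᵥ v‖ := sdd_mulVec_lower B (2 * Δ) key
    have hinj : Function.Injective B.mulVec := by
      intro x y hxy
      have h0 : B *ᵥ (x - y) = 0 := by rw [Matrix.mulVec_sub, hxy, sub_self]
      have h1 := hlow (x - y)
      rw [h0, norm_zero] at h1
      have h2 : ‖x - y‖ ≤ 0 := by nlinarith [norm_nonneg (x - y)]
      have h3 := le_antisymm h2 (norm_nonneg _)
      rwa [norm_eq_zero, sub_eq_zero] at h3
    have hunit : IsUnit B := Matrix.mulVec_injective_iff_isUnit.mp hinj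
    refine ⟨hunit, ?_⟩
    have hdet : IsUnit B.det := (Matrix.isUnit_iff_isUnit_det B).mp hunit
    have hBB : B * B⁻¹ = 1 := Matrix.mul_nonsing_inv B hdet
    have hinv : ∀ v : Fin n ⊕ Fin n → ℝ, ‖B⁻¹ *ᵥ v‖ ≤ (1 / (2 * Δ)) * ‖v‖ := by
      intro v
      have h := hlow (B⁻¹ *ᵥ v)
      rw [Matrix.mulVec_mulVec, hBB, Matrix.one_mulVec] at h
      rw [one_div, inv_mul_eq_div, le_div_iff₀ (by linarith), mul_comm]
      exact h
    have hrowinv : ∀ i, ∑ j, |B⁻¹ i j| ≤ 1 / (2 * Δ) := by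
      intro i
      set v : Fin n ⊕ Fin n → ℝ := fun j => Real.sign (B⁻¹ i j) with hv
      have hvn : ‖v‖ ≤ 1 := by
        apply (pi_norm_le_iff_of_nonneg zero_le_one).2
        intro j
        rw [Real.norm_eq_abs]
        rcases lt_trichotomy (B⁻¹ i j) 0 with h | h | h <;>
          simp [hv, Real.sign_of_neg, Real.sign_of_pos, h]
      have hsign : ∀ j, B⁻¹ i j * v j = |B⁻¹ i j| := by
        intro j
        rcases lt_trichotomy (B⁻¹ i j) 0 with h | h | h
        · simp [hv, Real.sign_of_neg h, abs_of_neg h]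
        · simp [hv, h]
        · simp [hv, Real.sign_of_pos h, abs_of_pos h]
      have happ : (B⁻¹ *ᵥ v) i = ∑ j, |B⁻¹ i j| := by
        rw [Matrix.mulVec, dotProduct]
        exact Finset.sum_congr rfl fun j _ => hsign j
      calc ∑ j, |B⁻¹ i j| = (B⁻¹ *ᵥ v) i := happ.symm
        _ ≤ |(B⁻¹ *ᵥ v) i| := le_abs_self _
        _ ≤ ‖B⁻¹ *ᵥ v‖ := by simpa [Real.norm_eq_abs] using norm_le_pi_norm (B⁻¹ *ᵥ v) i
        _ ≤ (1 / (2 * Δ)) * ‖v‖ := hinv v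
        _ ≤ (1 / (2 * Δ)) * 1 := by
            apply mul_le_mul_of_nonneg_left hvn
            positivity
        _ = 1 / (2 * Δ) := mul_one _
    exact linfty_norm_le_of_rows B⁻¹ (by positivity) hrowinv
end

section
/- Let m = n, let P ∈ ℝ^{n×n} have all entries positive, set Δ := min_{i,j} P_{ij}, q := (1_n, −1_n) ∈ ℝ^{2n}, A := [[diag(P 1_n), P], [Pᵀ, diag(Pᵀ 1_n)]], and B := A + Δ q qᵀ. Then for every row index i of the 2n×2n matrix B, the diagonal dominance excess satisfies |B_{ii}| − Σ_{j ≠ i} |B_{ij}| = 2Δ. -/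
open Matrix

/-- For a positive matrix `P`, with `Δ := min_{ij} P_{ij}`, `q := (1_n, −1_n)`,
`A := [[diag(P 1), P], [Pᵀ, diag(Pᵀ 1)]]` and `B := A + Δ q qᵀ`, every row of the
`2n×2n` matrix `B` has diagonal dominance excess exactly `2Δ`:
`|B_{ii}| − Σ_{j ≠ i} |B_{ij}| = 2Δ`. -/
theorem shifted_jacobian_diagonal_dominance (n : ℕ) (P : Matrix (Fin n) (Fin n) ℝ)
    (hP : ∀ i j, 0 < P i j) :
    let Δ : ℝ := ⨅ p : Fin n × Fin n, P p.1 p.2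
    let q : Fin n ⊕ Fin n → ℝ := Sum.elim (fun _ => (1 : ℝ)) (fun _ => (-1 : ℝ))
    let A : Matrix (Fin n ⊕ Fin n) (Fin n ⊕ Fin n) ℝ :=
      Matrix.fromBlocks (Matrix.diagonal (P *ᵥ 1)) P Pᵀ (Matrix.diagonal (Pᵀ *ᵥ 1))
    let B : Matrix (Fin n ⊕ Fin n) (Fin n ⊕ Fin n) ℝ := A + Δ • Matrix.vecMulVec q q
    ∀ i : Fin n ⊕ Fin n,
      |B i i| - ∑ j ∈ Finset.univ.erase i, |B i j| = 2 * Δ := by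
  intro Δ q A B i
  have hne : Nonempty (Fin n) := ⟨i.elim id id⟩
  have hΔle : ∀ a b, Δ ≤ P a b := fun a b =>
    ciInf_le (Set.Finite.bddBelow (Set.finite_range _)) (a, b)
  have hΔ0 : 0 ≤ Δ := le_ciInf fun p => (hP p.1 p.2).le
  have hrow : ∀ a, (P *ᵥ (1 : Fin n → ℝ)) a = ∑ c, P a c := by
    intro a; simp [Matrix.mulVec, dotProduct]
  have hcol : ∀ a, (Pᵀ *ᵥ (1 : Fin n → ℝ)) a = ∑ c, P c a := by
    intro a; simp [Matrix.mulVec, dotProduct, Matrix.transpose_apply]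
  have hrs : ∀ a, (0:ℝ) ≤ ∑ c, P a c := fun a => Finset.sum_nonneg fun c _ => (hP a c).le
  have hcs : ∀ a, (0:ℝ) ≤ ∑ c, P c a := fun a => Finset.sum_nonneg fun c _ => (hP c a).le
  rw [Finset.sum_erase_eq_sub (Finset.mem_univ i)]
  cases i with
  | inl a =>
    have h1 : ∀ b, |B (Sum.inl a) (Sum.inl b)| = (if a = b then ∑ c, P a c else 0) + Δ := by
      intro b
      have hB : B (Sum.inl a) (Sum.inl b) = (if a = b then ∑ c, P a c else 0) + Δ := by
        simp [B, A, q, Matrix.fromBlocks, Matrix.diagonal_apply, Matrix.vecMulVec_apply,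
          hrow, smul_eq_mul, Matrix.add_apply]
      rw [hB, abs_of_nonneg]
      apply add_nonneg _ hΔ0
      split_ifs
      · exact hrs a
      · exact le_rfl
    have h2 : ∀ b, |B (Sum.inl a) (Sum.inr b)| = P a b - Δ := by
      intro b
      have hB : B (Sum.inl a) (Sum.inr b) = P a b - Δ := by
        simp [B, A, q, Matrix.fromBlocks, Matrix.vecMulVec_apply, smul_eq_mul,
          Matrix.add_apply]
        ring
      rw [hB, abs_of_nonneg (sub_nonneg.2 (hΔle a b))]
    have hsum : ∑ j, |B (Sum.inl a) j| = 2 * ∑ c, P a c := by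
      rw [Fintype.sum_sum_type]
      simp only [h1, h2]
      rw [Finset.sum_add_distrib, Finset.sum_ite_eq, Finset.sum_const,
        Finset.sum_sub_distrib, Finset.sum_const]
      simp [Finset.card_univ, nsmul_eq_mul]
      ring
    rw [hsum, h1 a, if_pos rfl]
    ring
  | inr a =>
    have h1 : ∀ b, |B (Sum.inr a) (Sum.inr b)| = (if a = b then ∑ c, P c a else 0) + Δ := by
      intro b
      have hB : B (Sum.inr a) (Sum.inr b) = (if a = b then ∑ c, P c a else 0) + Δ := by
        simp [B, A, q, Matrix.fromBlocks, Matrix.diagonal_apply, Matrix.vecMulVec_apply,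
          hcol, smul_eq_mul, Matrix.add_apply]
      rw [hB, abs_of_nonneg]
      apply add_nonneg _ hΔ0
      split_ifs
      · exact hcs a
      · exact le_rfl
    have h2 : ∀ b, |B (Sum.inr a) (Sum.inl b)| = P b a - Δ := by
      intro b
      have hB : B (Sum.inr a) (Sum.inl b) = P b a - Δ := by
        simp [B, A, q, Matrix.fromBlocks, Matrix.vecMulVec_apply, smul_eq_mul,
          Matrix.add_apply, Matrix.transpose_apply]
        ring
      rw [hB, abs_of_nonneg (sub_nonneg.2 (hΔle b a))]
    have hsum : ∑ j, |B (Sum.inr a) j| = 2 * ∑ c, P c a := by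
      rw [Fintype.sum_sum_type]
      simp only [h1, h2]
      rw [Finset.sum_add_distrib, Finset.sum_ite_eq, Finset.sum_const,
        Finset.sum_sub_distrib, Finset.sum_const]
      simp [Finset.card_univ, nsmul_eq_mul]
      ring
    rw [hsum, h1 a, if_pos rfl]
    ring
end

section
/- Suppose f ∈ ℝ^n and g ∈ ℝ^m satisfy the optimality conditions a = diag(e^{-f/ε}) K e^{-g/ε} and b = diag(e^{-g/ε}) Kᵀ e^{-f/ε}, and set P := diag(e^{-f/ε}) K diag(e^{-g/ε}). Then the primal objective value at P equals the dual objective value at (f,g): ⟨C, P⟩ + ε ⟨P, log P − 1_{n,m}⟩ = −⟨a, f⟩ − ⟨b, g⟩ − ε ⟨e^{-f/ε}, K e^{-g/ε}⟩. -/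
open Matrix

/-!
The Gibbs kernel `P i j = exp (-(f i + C i j + g j) / ε)` satisfies `ε log P = -(f + C + g)`, so
the primal integrand `C P + ε P (log P - 1)` collapses to `-(f i + ε + g j) P`. Summing, the
optimality conditions identify the row sums of `P` with `a` and its column sums with `b`, and
the total mass `∑ a` is exactly the last term of the dual objective.
-/

section Scaling

variable {R ι κ : Type*} [CommSemiring R]

theorem Matrix.sum_scaled_row [Fintype κ] (u : ι → R) (K : Matrix ι κ R) (v : κ → R)
    (i : ι) :
    ∑ j, u i * K i j * v j = u i * (K *ᵥ v) i := by
  simp only [mulVec, dotProduct, Finset.mul_sum, mul_assoc]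

theorem Matrix.sum_scaled_col [Fintype ι] (u : ι → R) (K : Matrix ι κ R) (v : κ → R)
    (j : κ) :
    ∑ i, u i * K i j * v j = v j * (Kᵀ *ᵥ u) j := by
  simp only [mulVec, dotProduct, transpose_apply, Finset.mul_sum]
  exact Finset.sum_congr rfl fun i _ => by ring

theorem Matrix.sum_sum_add_mul [Fintype ι] [Fintype κ] (x : ι → R) (y : κ → R)
    (P : Matrix ι κ R) :
    ∑ i, ∑ j, (x i + y j) * P i j = ∑ i, x i * ∑ j, P i j + ∑ j, y j * ∑ i, P i j := by
  simp only [add_mul, Finset.sum_add_distrib, Finset.mul_sum]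
  rw [Finset.sum_comm (f := fun i j => y j * P i j)]

end Scaling

theorem Real.cost_add_entropy_of_gibbs {ε : ℝ} (hε : ε ≠ 0) (x c y : ℝ) :
    let p := Real.exp (-x / ε) * Real.exp (-c / ε) * Real.exp (-y / ε)
    c * p + ε * (p * (Real.log p - 1)) = -((x + ε + y) * p) := by
  intro p
  have hlog : Real.log p = -(x + c + y) / ε := by
    simp only [p, ← Real.exp_add, Real.log_exp]
    ring
  rw [hlog]
  field_simp
  ring

/-- If `(f, g)` satisfies the optimality conditions
`a = diag(e^{-f/ε}) K e^{-g/ε}` and `b = diag(e^{-g/ε}) Kᵀ e^{-f/ε}`, and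
`P := diag(e^{-f/ε}) K diag(e^{-g/ε})`, then the primal objective value at `P`
equals the dual objective value at `(f, g)`. -/
theorem strong_duality_at_optimum (n m : ℕ) (a : Fin n → ℝ) (b : Fin m → ℝ)
    (C : Matrix (Fin n) (Fin m) ℝ) (ε : ℝ) (hε : 0 < ε)
    (f : Fin n → ℝ) (g : Fin m → ℝ)
    (ha : ∀ i, a i =
      Real.exp (-f i / ε) *
        ((fun i j => Real.exp (-C i j / ε)) *ᵥ fun j => Real.exp (-g j / ε)) i)
    (hb : ∀ j, b j =
      Real.exp (-g j / ε) *
        ((fun i j => Real.exp (-C i j / ε))ᵀ *ᵥ fun i => Real.exp (-f i / ε)) j) :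
    let K : Matrix (Fin n) (Fin m) ℝ := fun i j => Real.exp (-C i j / ε)
    let P : Matrix (Fin n) (Fin m) ℝ :=
      fun i j => Real.exp (-f i / ε) * K i j * Real.exp (-g j / ε)
    (∑ i, ∑ j, C i j * P i j) + ε * ∑ i, ∑ j, P i j * (Real.log (P i j) - 1) =
      -(∑ i, a i * f i) - (∑ j, b j * g j) -
        ε * ∑ i, Real.exp (-f i / ε) * (K *ᵥ fun j => Real.exp (-g j / ε)) i := by
  intro K P
  have row_sum (i) : ∑ j, P i j = a i :=
    (sum_scaled_row (fun i => Real.exp (-f i / ε)) K (fun j => Real.exp (-g j / ε)) i).trans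
      (ha i).symm
  have col_sum (j) : ∑ i, P i j = b j :=
    (sum_scaled_col (fun i => Real.exp (-f i / ε)) K (fun j => Real.exp (-g j / ε)) j).trans
      (hb j).symm
  have mass : ∑ i, Real.exp (-f i / ε) * (K *ᵥ fun j => Real.exp (-g j / ε)) i = ∑ i, a i :=
    Finset.sum_congr rfl fun i _ => (ha i).symm
  have integrand (i j) : C i j * P i j + ε * (P i j * (Real.log (P i j) - 1)) =
      -((f i + ε + g j) * P i j) :=
    Real.cost_add_entropy_of_gibbs hε.ne' (f i) (C i j) (g j)
  calc (∑ i, ∑ j, C i j * P i j) + ε * ∑ i, ∑ j, P i j * (Real.log (P i j) - 1)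
      = -∑ i, ∑ j, (f i + ε + g j) * P i j := by
        simp only [Finset.mul_sum, ← Finset.sum_add_distrib, integrand, Finset.sum_neg_distrib]
    _ = -(∑ i, a i * f i) - (∑ j, b j * g j) - ε * ∑ i, a i := by
        rw [sum_sum_add_mul]
        simp only [row_sum, col_sum, add_mul, Finset.sum_add_distrib, ← Finset.mul_sum,
          mul_comm (f _), mul_comm (g _)]
        ring
    _ = _ := by rw [mass]
end

section
/- Suppose f ∈ ℝ^n and g ∈ ℝ^m satisfy the optimality conditions a = diag(e^{-f/ε}) K e^{-g/ε} and b = diag(e^{-g/ε}) Kᵀ e^{-f/ε}, and set P := diag(e^{-f/ε}) K diag(e^{-g/ε}). Then P ∈ U(a,b), and P minimizes the entropically regularized transport objective: for every Q ∈ U(a,b) with all entries positive, ⟨C, Q⟩ + ε ⟨Q, log Q − 1_{n,m}⟩ ≥ ⟨C, P⟩ + ε ⟨P, log P − 1_{n,m}⟩. -/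
open Matrix

/-! The plan `P` has the Gibbs form `ε log P i j = -C i j - f i - g j`, so the entropic
objective, whose integrand `q ↦ q (log q - 1)` is convex with derivative `log q`, lies above
its tangent at `P`. The tangent term `∑ (C + ε log P) (Q - P) = -∑ (f i + g j) (Q - P)` vanishes
because `Q` and `P` have the same marginals. -/

namespace Real

theorem mul_log_sub_one_tangent_le {p q : ℝ} (hp : 0 < p) (hq : 0 ≤ q) :
    p * (log p - 1) + log p * (q - p) ≤ q * (log q - 1) := by
  rcases hq.eq_or_lt with rfl | hq
  · calc p * (log p - 1) + log p * (0 - p) = -p := by ring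
      _ ≤ 0 * (log 0 - 1) := by simpa using hp.le
  have hlog : q * (log p - log q) ≤ p - q :=
    calc q * (log p - log q) = q * log (p / q) := by rw [log_div hp.ne' hq.ne']
      _ ≤ q * (p / q - 1) :=
        mul_le_mul_of_nonneg_left (log_le_sub_one_of_pos (div_pos hp hq)) hq.le
      _ = p - q := by field_simp
  linear_combination hlog

end Real

namespace Matrix

variable {ι κ R : Type*} [CommSemiring R]

theorem sum_sum_add_mul_apply [Fintype ι] [Fintype κ] (u : ι → R) (v : κ → R)
    (Q : Matrix ι κ R) :
    ∑ i, ∑ j, (u i + v j) * Q i j = u ⬝ᵥ (Q *ᵥ 1) + v ⬝ᵥ (Qᵀ *ᵥ 1) := by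
  simp only [dotProduct, mulVec, transpose_apply, Pi.one_apply, mul_one, Finset.mul_sum,
    add_mul, Finset.sum_add_distrib]
  rw [Finset.sum_comm (f := fun i j => v j * Q i j)]

theorem scaled_mulVec_one [Fintype κ] (x : ι → R) (K : Matrix ι κ R) (y : κ → R) :
    (of fun i j => x i * K i j * y j) *ᵥ 1 = fun i => x i * (K *ᵥ y) i := by
  ext i
  simp only [mulVec, dotProduct, of_apply, Pi.one_apply, mul_one, Finset.mul_sum, mul_assoc]

theorem scaled_transpose_mulVec_one [Fintype ι] (x : ι → R) (K : Matrix ι κ R)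
    (y : κ → R) : (of fun i j => x i * K i j * y j)ᵀ *ᵥ 1 = fun j => y j * (Kᵀ *ᵥ x) j := by
  ext j
  simp only [mulVec, dotProduct, transpose_apply, of_apply, Pi.one_apply, mul_one,
    Finset.mul_sum]
  exact Finset.sum_congr rfl fun i _ => by ring

end Matrix

section EntropicTransport

open Real

variable {ι κ : Type*} [Fintype ι] [Fintype κ]

noncomputable def entropicCost (C : Matrix ι κ ℝ) (ε : ℝ) (Q : Matrix ι κ ℝ) : ℝ :=
  (∑ i, ∑ j, C i j * Q i j) + ε * ∑ i, ∑ j, Q i j * (log (Q i j) - 1)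

theorem entropicCost_eq_sum (C : Matrix ι κ ℝ) (ε : ℝ) (Q : Matrix ι κ ℝ) :
    entropicCost C ε Q = ∑ i, ∑ j, (C i j * Q i j + ε * (Q i j * (log (Q i j) - 1))) := by
  simp only [entropicCost, Finset.mul_sum, ← Finset.sum_add_distrib]

theorem entropicCost_le_of_gibbs {C P Q : Matrix ι κ ℝ} {ε : ℝ} {u : ι → ℝ} {v : κ → ℝ}
    (hε : 0 ≤ ε) (hP : ∀ i j, 0 < P i j) (hgibbs : ∀ i j, C i j + ε * log (P i j) = u i + v j)
    (hQ : ∀ i j, 0 ≤ Q i j) (hrow : Q *ᵥ 1 = P *ᵥ 1) (hcol : Qᵀ *ᵥ 1 = Pᵀ *ᵥ 1) :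
    entropicCost C ε P ≤ entropicCost C ε Q := by
  have htangent : ∀ i j, C i j * P i j + ε * (P i j * (log (P i j) - 1))
      + (u i + v j) * (Q i j - P i j) ≤ C i j * Q i j + ε * (Q i j * (log (Q i j) - 1)) := by
    intro i j
    rw [← hgibbs]
    linear_combination ε * mul_log_sub_one_tangent_le (hP i j) (hQ i j)
  have hmarginals : ∑ i, ∑ j, (u i + v j) * (Q i j - P i j) = 0 := by
    simp only [mul_sub, Finset.sum_sub_distrib]
    rw [sub_eq_zero, sum_sum_add_mul_apply, sum_sum_add_mul_apply, hrow, hcol]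
  calc entropicCost C ε P
      = entropicCost C ε P + ∑ i, ∑ j, (u i + v j) * (Q i j - P i j) := by
        rw [hmarginals, add_zero]
    _ = ∑ i, ∑ j, (C i j * P i j + ε * (P i j * (log (P i j) - 1))
          + (u i + v j) * (Q i j - P i j)) := by
      simp only [entropicCost_eq_sum, ← Finset.sum_add_distrib]
    _ ≤ ∑ i, ∑ j, (C i j * Q i j + ε * (Q i j * (log (Q i j) - 1))) :=
      Finset.sum_le_sum fun i _ => Finset.sum_le_sum fun j _ => htangent i j
    _ = entropicCost C ε Q := (entropicCost_eq_sum C ε Q).symm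

end EntropicTransport

/-- If `(f, g)` satisfies the optimality conditions
`a = diag(e^{-f/ε}) K e^{-g/ε}` and `b = diag(e^{-g/ε}) Kᵀ e^{-f/ε}`, then
`P := diag(e^{-f/ε}) K diag(e^{-g/ε})` lies in `U(a,b)` and minimizes the
entropically regularized transport objective over all positive plans in `U(a,b)`. -/
theorem optimality_conditions_give_minimizer (n m : ℕ) (a : Fin n → ℝ) (b : Fin m → ℝ)
    (C : Matrix (Fin n) (Fin m) ℝ) (ε : ℝ) (hε : 0 < ε)
    (f : Fin n → ℝ) (g : Fin m → ℝ)
    (ha : ∀ i, a i =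
      Real.exp (-f i / ε) *
        ((fun i j => Real.exp (-C i j / ε)) *ᵥ fun j => Real.exp (-g j / ε)) i)
    (hb : ∀ j, b j =
      Real.exp (-g j / ε) *
        ((fun i j => Real.exp (-C i j / ε))ᵀ *ᵥ fun i => Real.exp (-f i / ε)) j) :
    let P : Matrix (Fin n) (Fin m) ℝ :=
      fun i j => Real.exp (-f i / ε) * Real.exp (-C i j / ε) * Real.exp (-g j / ε)
    ((∀ i j, 0 ≤ P i j) ∧ P *ᵥ 1 = a ∧ Pᵀ *ᵥ 1 = b) ∧
      ∀ Q : Matrix (Fin n) (Fin m) ℝ,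
        (∀ i j, 0 ≤ Q i j) → Q *ᵥ 1 = a → Qᵀ *ᵥ 1 = b → (∀ i j, 0 < Q i j) →
        (∑ i, ∑ j, C i j * Q i j) + ε * ∑ i, ∑ j, Q i j * (Real.log (Q i j) - 1) ≥
          (∑ i, ∑ j, C i j * P i j) + ε * ∑ i, ∑ j, P i j * (Real.log (P i j) - 1) := by
  intro P
  have hP : ∀ i j, 0 < P i j := fun i j => by positivity
  have hrow : P *ᵥ 1 = a := (scaled_mulVec_one _ _ _).trans (funext fun i => (ha i).symm)
  have hcol : Pᵀ *ᵥ 1 = b :=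
    (scaled_transpose_mulVec_one _ _ _).trans (funext fun j => (hb j).symm)
  have hgibbs : ∀ i j, C i j + ε * Real.log (P i j) = -f i + -g j := fun i j => by
    simp only [P]
    rw [← Real.exp_add, ← Real.exp_add, Real.log_exp]
    field_simp
    ring
  refine ⟨⟨fun i j => (hP i j).le, hrow, hcol⟩, fun Q hQ hQrow hQcol _ => ?_⟩
  exact entropicCost_le_of_gibbs hε.le hP hgibbs hQ (hQrow.trans hrow.symm)
    (hQcol.trans hcol.symm)
end

section
/- Weak duality holds between the entropically regularized Kantorovich problem and its dual: for every Q ∈ U(a,b) with all entries positive and every f ∈ ℝ^n, g ∈ ℝ^m, one has ⟨C, Q⟩ + ε ⟨Q, log Q − 1_{n,m}⟩ ≥ −⟨a, f⟩ − ⟨b, g⟩ − ε ⟨e^{-f/ε}, K e^{-g/ε}⟩. -/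
open Matrix

lemma key_ineq (x t : ℝ) (hx : 0 < x) : t * x - Real.exp t ≤ x * (Real.log x - 1) := by
  have h := Real.add_one_le_exp (t - Real.log x)
  have h2 := mul_le_mul_of_nonneg_left h hx.le
  rw [Real.exp_sub, Real.exp_log hx, mul_div_cancel₀ _ hx.ne'] at h2
  nlinarith

/-- Weak duality between the entropically regularized Kantorovich problem and its dual:
for every positive `Q ∈ U(a,b)` and every `f ∈ ℝ^n`, `g ∈ ℝ^m`,
`⟨C, Q⟩ + ε ⟨Q, log Q − 1⟩ ≥ −⟨a, f⟩ − ⟨b, g⟩ − ε ⟨e^{-f/ε}, K e^{-g/ε}⟩`. -/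
theorem weak_duality (n m : ℕ) (a : Fin n → ℝ) (b : Fin m → ℝ)
    (C : Matrix (Fin n) (Fin m) ℝ) (ε : ℝ) (hε : 0 < ε)
    (Q : Matrix (Fin n) (Fin m) ℝ) (hQpos : ∀ i j, 0 < Q i j)
    (hQrow : Q *ᵥ 1 = a) (hQcol : Qᵀ *ᵥ 1 = b)
    (f : Fin n → ℝ) (g : Fin m → ℝ) :
    let K : Matrix (Fin n) (Fin m) ℝ := fun i j => Real.exp (-C i j / ε)
    (∑ i, ∑ j, C i j * Q i j) + ε * ∑ i, ∑ j, Q i j * (Real.log (Q i j) - 1) ≥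
      -(∑ i, a i * f i) - (∑ j, b j * g j) -
        ε * ∑ i, Real.exp (-f i / ε) * (K *ᵥ fun j => Real.exp (-g j / ε)) i := by
  intro K
  have ha : ∀ i, a i = ∑ j, Q i j := by
    intro i; rw [← hQrow]; simp [Matrix.mulVec, dotProduct]
  have hb : ∀ j, b j = ∑ i, Q i j := by
    intro j; rw [← hQcol]; simp [Matrix.mulVec, dotProduct, Matrix.transpose]
  have hKv : ∀ i, Real.exp (-f i / ε) * (K *ᵥ fun j => Real.exp (-g j / ε)) i
      = ∑ j, Real.exp ((-f i - g j - C i j) / ε) := by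
    intro i
    simp only [Matrix.mulVec, dotProduct, K, Finset.mul_sum]
    refine Finset.sum_congr rfl fun j _ => ?_
    rw [← Real.exp_add, ← Real.exp_add]
    ring_nf
  have main : ∀ i j, -(Q i j * f i) - Q i j * g j - ε * Real.exp ((-f i - g j - C i j) / ε)
      ≤ C i j * Q i j + ε * (Q i j * (Real.log (Q i j) - 1)) := by
    intro i j
    have h := key_ineq (Q i j) ((-f i - g j - C i j) / ε) (hQpos i j)
    have h2 := mul_le_mul_of_nonneg_left h hε.le
    have : ε * ((-f i - g j - C i j) / ε * Q i j) = (-f i - g j - C i j) * Q i j := by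
      field_simp
    nlinarith
  have hsum := Finset.sum_le_sum fun i (_ : i ∈ Finset.univ) =>
    Finset.sum_le_sum fun j (_ : j ∈ Finset.univ) => main i j
  rw [ge_iff_le]
  calc -(∑ i, a i * f i) - (∑ j, b j * g j) -
        ε * ∑ i, Real.exp (-f i / ε) * (K *ᵥ fun j => Real.exp (-g j / ε)) i
      = ∑ i, ∑ j, (-(Q i j * f i) - Q i j * g j - ε * Real.exp ((-f i - g j - C i j) / ε)) := by
        simp only [ha, hb, hKv, Finset.sum_mul, Finset.mul_sum, Finset.sum_sub_distrib,
          Finset.sum_neg_distrib]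
        rw [Finset.sum_comm (s := Finset.univ) (t := Finset.univ) (f := fun j i => Q i j * g j)]
    _ ≤ ∑ i, ∑ j, (C i j * Q i j + ε * (Q i j * (Real.log (Q i j) - 1))) := hsum
    _ = (∑ i, ∑ j, C i j * Q i j) + ε * ∑ i, ∑ j, Q i j * (Real.log (Q i j) - 1) := by
        simp [Finset.sum_add_distrib, Finset.mul_sum]
end
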